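/- arXiv:2304.03007 — 10 statements merged into one kernel-verified Lean document; each statement's English description precedes it below -/
import Mathlib

section
/- For nonzero integers a and b, the set G_{a,b} = {(gcd(a,c), gcd(a,b-c)) : c ∈ ℤ} equals G_{a,d} where d = gcd(a,b). -/
private lemma natLiftCoprime {x n m : ℕ} (hnm : n ∣ m) (hm : m ≠ 0) (hx : Nat.Coprime x n) :
    ∃ k : ℕ, Nat.Coprime (x + k * n) m := by
  let ps := m.primeFactors.filter (fun p ↦ ¬p ∣ x)
  use ps.prod id
  apply Nat.coprime_of_dvd
  intro p pp hp hpn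
  by_cases hpx : p ∣ x
  · have h := Nat.dvd_sub hp hpx
    rw [add_comm, Nat.add_sub_cancel] at h
    rcases pp.dvd_mul.mp h with h | h
    · have ⟨q, hq, hq'⟩ := (pp.prime.dvd_finset_prod_iff id).mp h
      rw [Finset.mem_filter, Nat.mem_primeFactors,
        ← (Nat.prime_dvd_prime_iff_eq pp hq.1.1).mp hq'] at hq
      exact hq.2 hpx
    · exact Nat.Prime.not_coprime_iff_dvd.mpr ⟨p, pp, hpx, h⟩ hx
  · have pps : p ∈ ps := Finset.mem_filter.mpr ⟨Nat.mem_primeFactors.mpr ⟨pp, hpn, hm⟩, hpx⟩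
    have h := Nat.dvd_sub hp ((Finset.dvd_prod_of_mem id pps).mul_right n)
    rw [Nat.add_sub_cancel] at h
    contradiction

private lemma gcd_eq_of_dvd_sub {a x y : ℤ} (h : a ∣ x - y) : Int.gcd a x = Int.gcd a y := by
  have key : ∀ u v : ℤ, a ∣ u - v → (Int.gcd a u : ℤ) ∣ Int.gcd a v := by
    intro u v huv
    apply Int.dvd_coe_gcd (Int.gcd_dvd_left _ _)
    have hv : v = u - (u - v) := by ring
    rw [hv]
    exact dvd_sub (Int.gcd_dvd_right _ _) ((Int.gcd_dvd_left _ _).trans huv)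
  have h1 := key x y h
  have h2 := key y x (by
    have : y - x = -(x - y) := by ring
    rw [this]; exact dvd_neg.mpr h)
  exact Nat.dvd_antisymm (Int.ofNat_dvd.mp h1) (Int.ofNat_dvd.mp h2)

private lemma gcd_mul_cancel {a t : ℤ} (x : ℤ) (h : Int.gcd t a = 1) :
    Int.gcd a (t * x) = Int.gcd a x := by
  have hco : Nat.Coprime t.natAbs a.natAbs := h
  show Nat.gcd a.natAbs (t * x).natAbs = Nat.gcd a.natAbs x.natAbs
  rw [Int.natAbs_mul]
  exact Nat.Coprime.gcd_mul_left_cancel_right _ hco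

private lemma exists_t (a b : ℤ) (ha : a ≠ 0) :
    ∃ t t' : ℤ, Int.gcd t a = 1 ∧ Int.gcd t' a = 1 ∧ a ∣ t * t' - 1 ∧
      a ∣ b - t * (Int.gcd a b : ℤ) := by
  set d : ℕ := Int.gcd a b with hd
  have hdpos : 0 < d := Int.gcd_pos_iff.mpr (Or.inl ha)
  have hda : (d : ℤ) ∣ a := Int.gcd_dvd_left _ _
  set a₀ : ℤ := a / d with ha₀
  set b₀ : ℤ := b / d with hb₀
  have haa₀ : a = a₀ * d := (Int.ediv_mul_cancel hda).symm
  have hco : Int.gcd a₀ b₀ = 1 := Int.gcd_div_gcd_div_gcd hdpos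
  have ha₀ne : a₀ ≠ 0 := by
    intro h0; apply ha; rw [haa₀, h0, zero_mul]
  set x : ℤ := b₀ % a₀ with hx
  have hxnn : 0 ≤ x := Int.emod_nonneg b₀ ha₀ne
  have hxb : a₀ ∣ x - b₀ := ⟨-(b₀ / a₀), by rw [hx, Int.emod_def]; ring⟩
  have hgx : Int.gcd a₀ x = 1 := (gcd_eq_of_dvd_sub hxb).trans hco
  have hcx : Nat.Coprime x.toNat a₀.natAbs := by
    have hh : Int.gcd a₀ ((x.toNat : ℤ)) = 1 := by rw [Int.toNat_of_nonneg hxnn]; exact hgx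
    rw [Nat.Coprime, Nat.gcd_comm]
    rwa [Int.gcd, Int.natAbs_natCast] at hh
  have hdvd : a₀.natAbs ∣ a.natAbs := Int.natAbs_dvd_natAbs.mpr ⟨d, haa₀⟩
  have hane : a.natAbs ≠ 0 := Int.natAbs_ne_zero.mpr ha
  obtain ⟨k, hk⟩ := natLiftCoprime hdvd hane hcx
  set t : ℤ := ((x.toNat + k * a₀.natAbs : ℕ) : ℤ) with ht
  have hta : Int.gcd t a = 1 := by
    show Nat.gcd t.natAbs a.natAbs = 1
    rw [ht, Int.natAbs_natCast]
    exact hk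
  have htb : a₀ ∣ t - b₀ := by
    have h1 : a₀ ∣ (a₀.natAbs : ℤ) := Int.dvd_natAbs.mpr dvd_rfl
    have h2 : t - b₀ = (x - b₀) + (k : ℤ) * (a₀.natAbs : ℤ) := by
      rw [ht]; push_cast [Int.toNat_of_nonneg hxnn]; ring
    rw [h2]
    exact dvd_add hxb (Dvd.dvd.mul_left h1 _)
  have hbt : a ∣ b - t * (d : ℤ) := by
    have hb' : b = b₀ * d := (Int.ediv_mul_cancel (Int.gcd_dvd_right _ _)).symm
    have hrw : b - t * (d : ℤ) = -((t - b₀) * (d : ℤ)) := by rw [hb']; ring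
    rw [hrw, haa₀]
    exact dvd_neg.mpr (mul_dvd_mul_right htb _)
  refine ⟨t, Int.gcdA t a, hta, ?_, ?_, hbt⟩
  · have hbez : (1 : ℤ) = t * Int.gcdA t a + a * Int.gcdB t a := by
      have := Int.gcd_eq_gcd_ab t a
      rw [hta] at this
      exact_mod_cast this
    have hdvd1 : (Int.gcd (Int.gcdA t a) a : ℤ) ∣ 1 := by
      rw [hbez]
      exact dvd_add ((Int.gcd_dvd_left _ _).mul_left t) ((Int.gcd_dvd_right _ _).mul_right _)
    exact Nat.dvd_one.mp (by exact_mod_cast hdvd1)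
  · have hbez : (1 : ℤ) = t * Int.gcdA t a + a * Int.gcdB t a := by
      have := Int.gcd_eq_gcd_ab t a
      rw [hta] at this
      exact_mod_cast this
    refine ⟨-Int.gcdB t a, ?_⟩
    linarith [hbez]

/-- For nonzero integers `a`, `b`, the set `G_{a,b} = {(gcd(a,c), gcd(a,b-c)) : c ∈ ℤ}`
equals `G_{a,d}` where `d = gcd(a,b)`. -/
theorem G_eq_G_gcd (a b : ℤ) (ha : a ≠ 0) (hb : b ≠ 0) :
    {p : ℕ × ℕ | ∃ c : ℤ, p = (Int.gcd a c, Int.gcd a (b - c))} =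
    {p : ℕ × ℕ | ∃ c : ℤ, p = (Int.gcd a c, Int.gcd a ((Int.gcd a b : ℤ) - c))} := by
  obtain ⟨t, t', ht, ht', hinv, hbt⟩ := exists_t a b ha
  set D : ℤ := (Int.gcd a b : ℤ) with hD
  ext p
  simp only [Set.mem_setOf_eq]
  constructor
  · rintro ⟨c, rfl⟩
    refine ⟨t' * c, ?_⟩
    have h1 : Int.gcd a (t' * c) = Int.gcd a c := gcd_mul_cancel c ht'
    have h2 : Int.gcd a (D - t' * c) = Int.gcd a (b - c) := by
      have e1 : Int.gcd a (D - t' * c) = Int.gcd a (t * (D - t' * c)) :=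
        (gcd_mul_cancel _ ht).symm
      rw [e1]
      apply gcd_eq_of_dvd_sub
      have e2 : t * (D - t' * c) - (b - c) = -(b - t * D) - c * (t * t' - 1) := by ring
      rw [e2]
      exact dvd_sub (dvd_neg.mpr hbt) (hinv.mul_left c)
    rw [h1, h2]
  · rintro ⟨c, rfl⟩
    refine ⟨t * c, ?_⟩
    have h1 : Int.gcd a (t * c) = Int.gcd a c := gcd_mul_cancel c ht
    have h2 : Int.gcd a (b - t * c) = Int.gcd a (D - c) := by
      have e1 : Int.gcd a (D - c) = Int.gcd a (t * (D - c)) := (gcd_mul_cancel _ ht).symm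
      rw [e1]
      apply gcd_eq_of_dvd_sub
      have e2 : (b - t * c) - t * (D - c) = b - t * D := by ring
      rw [e2]
      exact hbt
    rw [h1, h2]
end

section
/- If gcd(a/d, b/d) = 1 where d = gcd(a,b) and a, b are nonzero integers, then there exists a prime p coprime to a with p ≡ b/d (mod a/d); consequently for every integer c, gcd(a, pc) = gcd(a,c) and gcd(a, b - pc) = gcd(a, d - c)... in particular G_{a,d} ⊆ G_{a,b}. -/
lemma aux_gcd_sub_dvd (a x y : ℤ) (h : a ∣ x - y) : Int.gcd a x = Int.gcd a y := by
  apply Nat.dvd_antisymm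
  · rw [← Int.natCast_dvd_natCast]
    refine Int.dvd_coe_gcd (Int.gcd_dvd_left _ _) ?_
    have : (Int.gcd a x : ℤ) ∣ x - y := dvd_trans (Int.gcd_dvd_left _ _) h
    have := dvd_sub (Int.gcd_dvd_right _ _) this
    simpa using this
  · rw [← Int.natCast_dvd_natCast]
    refine Int.dvd_coe_gcd (Int.gcd_dvd_left _ _) ?_
    have h1 : (Int.gcd a y : ℤ) ∣ x - y := dvd_trans (Int.gcd_dvd_left _ _) h
    have := dvd_add h1 (Int.gcd_dvd_right _ _)
    simpa using this

lemma aux_gcd_mul (a p c : ℤ) (h : IsCoprime p a) : Int.gcd a (p * c) = Int.gcd a c := by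
  apply Nat.dvd_antisymm
  · rw [← Int.natCast_dvd_natCast]
    refine Int.dvd_coe_gcd (Int.gcd_dvd_left _ _) ?_
    have hg : IsCoprime ((Int.gcd a (p * c) : ℤ)) p :=
      ((h.of_isCoprime_of_dvd_right (Int.gcd_dvd_left _ _)).symm)
    exact hg.dvd_of_dvd_mul_left (Int.gcd_dvd_right _ _)
  · rw [← Int.natCast_dvd_natCast]
    exact Int.dvd_coe_gcd (Int.gcd_dvd_left _ _) (Dvd.dvd.mul_left (Int.gcd_dvd_right _ _) p)

/-- There is a prime `p` coprime to `a` with `p ≡ b/d (mod a/d)` where `d = gcd(a,b)`;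
consequently `gcd(a,pc) = gcd(a,c)` and `gcd(a, b - pc) = gcd(a, d - c)` for all `c`, and
`G_{a,d} ⊆ G_{a,b}`. -/
theorem exists_prime_and_subset (a b : ℤ) (ha : a ≠ 0) (hb : b ≠ 0) (d : ℤ)
    (hd : d = Int.gcd a b) :
    ∃ p : ℕ, p.Prime ∧ IsCoprime (p : ℤ) a ∧ (p : ℤ) ≡ b / d [ZMOD (a / d)] ∧
      (∀ c : ℤ, Int.gcd a ((p : ℤ) * c) = Int.gcd a c ∧
        Int.gcd a (b - (p : ℤ) * c) = Int.gcd a (d - c)) ∧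
      {q : ℕ × ℕ | ∃ c : ℤ, q = (Int.gcd a c, Int.gcd a (d - c))} ⊆
        {q : ℕ × ℕ | ∃ c : ℤ, q = (Int.gcd a c, Int.gcd a (b - c))} := by
  have hgpos : 0 < Int.gcd a b := Int.gcd_pos_of_ne_zero_left b ha
  have hd0 : d ≠ 0 := by
    rw [hd]; exact_mod_cast hgpos.ne'
  have hda : d ∣ a := hd ▸ (Int.gcd_dvd_left _ _)
  have hdb : d ∣ b := hd ▸ (Int.gcd_dvd_right _ _)
  set a' := a / d with ha'
  set b' := b / d with hb'
  have haa : a = d * a' := (Int.mul_ediv_cancel' hda).symm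
  have hbb : b = d * b' := (Int.mul_ediv_cancel' hdb).symm
  have ha'0 : a' ≠ 0 := by
    intro h; apply ha; rw [haa, h, mul_zero]
  have hcop : Int.gcd a' b' = 1 := by
    rw [ha', hb', hd]; exact Int.gcd_div_gcd_div_gcd hgpos
  have hcop' : IsCoprime b' a' := by
    rw [Int.isCoprime_iff_gcd_eq_one, Int.gcd_comm]; exact hcop
  -- Dirichlet
  set n := a'.natAbs with hn
  have hn0 : n ≠ 0 := Int.natAbs_ne_zero.mpr ha'0
  haveI : NeZero n := ⟨hn0⟩
  have hna : ((n : ℤ)) ∣ a' := Int.natAbs_dvd.mpr dvd_rfl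
  have hunit : IsUnit ((b' : ℤ) : ZMod n) := by
    obtain ⟨u, v, huv⟩ := hcop'
    have h0 : ((a' : ℤ) : ZMod n) = 0 := by
      rw [ZMod.intCast_zmod_eq_zero_iff_dvd]
      exact_mod_cast hna
    have : ((u : ℤ) : ZMod n) * ((b' : ℤ) : ZMod n) = 1 := by
      have := congrArg (fun x : ℤ => (x : ZMod n)) huv
      push_cast at this
      rw [h0] at this
      simpa using this
    exact IsUnit.of_mul_eq_one _ (by rw [mul_comm] at this; exact this)
  obtain ⟨p, hpgt, hp, hpeq⟩ := Nat.forall_exists_prime_gt_and_eq_mod hunit a.natAbs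
  have hpa : IsCoprime (p : ℤ) a := by
    rw [Int.isCoprime_iff_gcd_eq_one]
    have : ¬ (p ∣ a.natAbs) := by
      intro hdvd
      have := Nat.le_of_dvd (Int.natAbs_pos.mpr ha) hdvd
      omega
    have := (Nat.Prime.coprime_iff_not_dvd hp).mpr this
    simpa [Int.gcd] using this
  have hmod : (p : ℤ) ≡ b' [ZMOD a'] := by
    have : ((p : ℤ) : ZMod n) = ((b' : ℤ) : ZMod n) := by
      rw [Int.cast_natCast]; exact hpeq
    have h2 : (p : ℤ) ≡ b' [ZMOD (n : ℤ)] := (ZMod.intCast_eq_intCast_iff _ _ _).mp this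
    exact Int.ModEq.of_dvd (Int.dvd_natAbs.mpr dvd_rfl) h2
  have hdvdsub : a' ∣ b' - p := Int.ModEq.dvd hmod
  have key : ∀ c : ℤ, Int.gcd a ((p : ℤ) * c) = Int.gcd a c ∧
      Int.gcd a (b - (p : ℤ) * c) = Int.gcd a (d - c) := by
    intro c
    refine ⟨aux_gcd_mul a p c hpa, ?_⟩
    have hstep : Int.gcd a (b - (p : ℤ) * c) = Int.gcd a ((p : ℤ) * (d - c)) := by
      apply aux_gcd_sub_dvd
      have : (b - (p : ℤ) * c) - (p : ℤ) * (d - c) = d * (b' - p) := by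
        rw [hbb]; ring
      rw [this, haa]
      exact mul_dvd_mul_left d hdvdsub
    rw [hstep, aux_gcd_mul a p _ hpa]
  refine ⟨p, hp, hpa, hmod, key, ?_⟩
  rintro ⟨x, y⟩ ⟨c, hc⟩
  exact ⟨(p : ℤ) * c, by rw [hc, (key c).1, (key c).2]⟩
end

section
/- Let w1, w2 be positive integers with w1 ≤ w2, and let q, r be the quotient and remainder of w2 divided by w1 (so w2 = q·w1 + r with 0 ≤ r < w1). Then for an integer y1 ∈ [0, w2], the inequality y1 ≤ ((w2 - y1) mod w1) holds if and only if 0 ≤ y1 ≤ r/2 or r < y1 ≤ (r + w1)/2. -/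
/-- For `0 < w1 ≤ w2`, with `w2 = q*w1 + r`, `0 ≤ r < w1`, an integer `y1 ∈ [0,w2]` satisfies
`y1 ≤ ((w2 - y1) mod w1)` iff `0 ≤ y1 ≤ r/2` or `r < y1 ≤ (r+w1)/2`. -/
theorem mod_ineq_iff (w1 w2 q r y1 : ℤ) (hw1 : 0 < w1) (hw : w1 ≤ w2)
    (hqr : w2 = q * w1 + r) (hr0 : 0 ≤ r) (hr1 : r < w1)
    (hy0 : 0 ≤ y1) (hy2 : y1 ≤ w2) :
    y1 ≤ (w2 - y1) % w1 ↔ (0 ≤ y1 ∧ 2 * y1 ≤ r) ∨ (r < y1 ∧ 2 * y1 ≤ r + w1) := by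
  have key : (w2 - y1) % w1 = (r - y1) % w1 := by
    have : w2 - y1 = r - y1 + q * w1 := by omega
    rw [this, Int.add_mul_emod_self_right]
  rw [key]
  rcases le_or_gt y1 r with h | h
  · rw [Int.emod_eq_of_lt (by omega) (by omega)]
    omega
  · rcases lt_or_ge y1 w1 with h2 | h2
    · have e : (r - y1) % w1 = r - y1 + w1 := by
        have h3 : r - y1 = (r - y1 + w1) + (-1) * w1 := by ring
        rw [h3, Int.add_mul_emod_self_right, Int.emod_eq_of_lt (by omega) (by omega)]; omega
      omega
    · have := Int.emod_lt_of_pos (r - y1) hw1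
      omega
end

section
/- Let w1, w2 be positive integers with w1 ≤ w2. The number of integers y1 in [0, w2] satisfying y1 ≤ ((w2 - y1) mod w1) is ⌈w1/2⌉ if w2 is odd, and ⌈(w1+1)/2⌉ if w2 is even. -/
lemma ceil_half_aux (n : ℤ) : ⌈(n : ℚ) / 2⌉ = (n + 1) / 2 := by
  rcases Int.even_or_odd n with ⟨k, hk⟩ | ⟨k, hk⟩
  · subst hk
    rw [show ((k + k : ℤ) : ℚ) / 2 = ((k : ℤ) : ℚ) by push_cast; ring, Int.ceil_intCast]
    omega
  · subst hk
    rw [show ((2 * k + 1 : ℤ) : ℚ) / 2 = (1 / 2 : ℚ) + ((k : ℤ) : ℚ) by push_cast; ring,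
      Int.ceil_add_intCast, show ⌈(1 / 2 : ℚ)⌉ = 1 by rw [Int.ceil_eq_iff]; norm_num]
    omega

/-- For `0 < w1 ≤ w2`, the number of integers `y1 ∈ [0,w2]` with `y1 ≤ ((w2 - y1) mod w1)`
is `⌈w1/2⌉` if `w2` is odd and `⌈(w1+1)/2⌉` if `w2` is even. -/
theorem count_mod_ineq (w1 w2 : ℤ) (hw1 : 0 < w1) (hw : w1 ≤ w2) :
    (((Finset.Icc (0 : ℤ) w2).filter (fun y1 => y1 ≤ (w2 - y1) % w1)).card : ℤ) =
      if Odd w2 then ⌈(w1 : ℚ) / 2⌉ else ⌈((w1 : ℚ) + 1) / 2⌉ := by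
  set s := w2 % w1 with hs
  have hs0 : 0 ≤ s := Int.emod_nonneg _ (by omega)
  have hs1 : s < w1 := Int.emod_lt_of_pos _ hw1
  have hpar : w2 % 2 = s % 2 ∨ w1 % 2 = 1 := by
    rcases Int.even_or_odd w1 with ⟨m, hm⟩ | ⟨m, hm⟩
    · left
      have hdvd : w1 ∣ w2 - s := Int.dvd_self_sub_of_emod_eq rfl
      obtain ⟨q, hq⟩ := hdvd
      have : w2 - s = 2 * (m * q) := by rw [hq, hm]; ring
      omega
    · right; omega
  have key : ∀ y1 : ℤ, 0 ≤ y1 → y1 ≤ w2 →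
      (y1 ≤ (w2 - y1) % w1 ↔ (2 * y1 ≤ s ∨ (s < y1 ∧ 2 * y1 ≤ s + w1))) := by
    intro y1 h0 h2
    have hmod : (w2 - y1) % w1 = (s - y1) % w1 := by
      rw [Int.sub_emod w2 y1]
      conv_rhs => rw [hs, Int.sub_emod, Int.emod_emod_of_dvd _ dvd_rfl]
    by_cases hy : y1 ≤ s
    · have : (w2 - y1) % w1 = s - y1 := by
        rw [hmod, Int.emod_eq_of_lt (by omega) (by omega)]
      omega
    · by_cases hy2 : y1 < w1
      · have haux := Int.add_mul_emod_self_left (a := s - y1) (b := w1) (c := 1)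
        rw [mul_one] at haux
        have : (w2 - y1) % w1 = s - y1 + w1 := by
          rw [hmod, ← haux, Int.emod_eq_of_lt (by omega) (by omega)]
        omega
      · have hlt : (w2 - y1) % w1 < w1 := Int.emod_lt_of_pos _ hw1
        constructor
        · intro h; omega
        · intro h; omega
  have hset : (Finset.Icc (0 : ℤ) w2).filter (fun y1 => y1 ≤ (w2 - y1) % w1)
      = Finset.Icc (0 : ℤ) (s / 2) ∪ Finset.Icc (s + 1) ((s + w1) / 2) := by
    ext y1
    simp only [Finset.mem_filter, Finset.mem_union, Finset.mem_Icc]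
    constructor
    · rintro ⟨⟨h0, h2⟩, hcond⟩
      have := (key y1 h0 h2).mp hcond
      omega
    · intro h
      have h0 : 0 ≤ y1 := by omega
      have h2 : y1 ≤ w2 := by omega
      exact ⟨⟨h0, h2⟩, (key y1 h0 h2).mpr (by omega)⟩
  have hdisj : Disjoint (Finset.Icc (0 : ℤ) (s / 2)) (Finset.Icc (s + 1) ((s + w1) / 2)) := by
    rw [Finset.disjoint_left]
    intro a ha hb
    simp only [Finset.mem_Icc] at ha hb
    omega
  rw [hset, Finset.card_union_of_disjoint hdisj, Int.card_Icc, Int.card_Icc]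
  push_cast
  by_cases hodd : Odd w2
  · rw [if_pos hodd, ceil_half_aux]
    rw [Int.odd_iff] at hodd
    omega
  · rw [if_neg hodd, show ((w1 : ℚ) + 1) = ((w1 + 1 : ℤ) : ℚ) by push_cast; ring,
      ceil_half_aux]
    rw [Int.not_odd_iff] at hodd
    omega
end

section
/- Let T be the convex hull of (0,0), (w1, y1), (x2, w2) in ℝ² where w1, w2 are positive integers, 0 < x2 ≤ w1/2, 0 ≤ y1 ≤ w1 - x2. Then for every integer k, the width of the sheared triangle T_k = conv((0,0), (w1, y1 + k·w1), (x2, w2 + k·x2)) with respect to (0,1) is at least w2. -/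
/-- For the triangle with vertices `(0,0)`, `(w1,y1)`, `(x2,w2)` where `0 < x2 ≤ w1/2` and
`0 ≤ y1 ≤ w1 - x2`, every shear `(x,y) ↦ (x, y + kx)` gives a triangle whose width with
respect to `(0,1)` is at least `w2`. -/
theorem sheared_width_ge_case_two (w1 w2 x2 y1 k : ℤ)
    (hw1 : 0 < w1) (hw2 : 0 < w2) (hx2 : 0 < x2) (hx2' : 2 * x2 ≤ w1)
    (hy1 : 0 ≤ y1) (hy1' : y1 ≤ w1 - x2) :
    w2 ≤ max 0 (max (y1 + k * w1) (w2 + k * x2)) -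
      min 0 (min (y1 + k * w1) (w2 + k * x2)) := by
  rcases le_or_gt 0 k with hk | hk
  · have h1 : 0 ≤ k * x2 := mul_nonneg hk hx2.le
    omega
  · have hk' : k ≤ -1 := by omega
    have h1 : k * (w1 - x2) ≤ -(w1 - x2) := by nlinarith
    have h2 : k * w1 - k * x2 = k * (w1 - x2) := by ring
    omega
end

section
/- Let T = conv((0,y0), (w1,0), (x2,w2)) where w1 < w2 are positive integers, 1 < x2 < w1/2, and 0 < y0 < x2. Then for every integer k, the width of conv((0,y0), (w1, k·w1), (x2, w2 + k·x2)) with respect to (0,1) is at least w2. -/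
/-- For the triangle with vertices `(0,y0)`, `(w1,0)`, `(x2,w2)` where `w1 < w2`,
`1 < x2 < w1/2` and `0 < y0 < x2`, every shear `(x,y) ↦ (x, y + kx)` gives a triangle whose
width with respect to `(0,1)` is at least `w2`. -/
theorem sheared_width_ge_case_three (w1 w2 x2 y0 k : ℤ)
    (hw1 : 0 < w1) (hw12 : w1 < w2) (hx2 : 1 < x2) (hx2' : 2 * x2 < w1)
    (hy0 : 0 < y0) (hy0' : y0 < x2) :
    w2 ≤ max y0 (max (k * w1) (w2 + k * x2)) -
      min y0 (min (k * w1) (w2 + k * x2)) := by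
  have hmax : w2 + k * x2 ≤ max y0 (max (k * w1) (w2 + k * x2)) :=
    le_trans (le_max_right _ _) (le_max_right _ _)
  rcases le_or_gt k 0 with hk | hk
  · have hmin : min y0 (min (k * w1) (w2 + k * x2)) ≤ k * w1 :=
      le_trans (min_le_right _ _) (min_le_left _ _)
    nlinarith
  · have hmin : min y0 (min (k * w1) (w2 + k * x2)) ≤ y0 := min_le_left _ _
    nlinarith
end

section
/- Let w1 be a positive integer, T = conv((0,0),(w1,y1),(x2,w1)) with 0 < x2 ≤ w1/2 and x2 ≤ y1 ≤ w1 - x2. If u = (u1,u2) ∈ ℤ² is linearly independent from (1,0) and the image of the three vertices under x ↦ u·x equals {n, n+m, n+w1} for integers n and m with 0 ≤ m ≤ w1, then x2 ≤ m ≤ w1 - x2. -/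
/-- Case `B = w1`, `0 ≤ A ≤ w1`: forces `u1 = 0`, `u2 = 1`. -/
lemma x2_minimal_case1 (w1 x2 y1 u1 u2 : ℤ) (hw1 : 0 < w1) (hx2 : 0 < x2)
    (hx2' : 2 * x2 ≤ w1) (hy1 : x2 ≤ y1) (hy1' : y1 ≤ w1 - x2)
    (hB : u1 * x2 + u2 * w1 = w1) (hA0 : 0 ≤ u1 * w1 + u2 * y1)
    (hA1 : u1 * w1 + u2 * y1 ≤ w1) : u1 = 0 ∧ u2 = 1 := by
  have h2 : u2 ≤ 1 := by
    by_contra h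
    push_neg at h
    nlinarith [mul_le_mul_of_nonneg_left hy1' (by linarith : (0:ℤ) ≤ u2),
      mul_pos hx2 hw1, sq_nonneg (w1 - x2), sq_nonneg x2]
  have h3 : 1 ≤ u2 := by
    by_contra h
    push_neg at h
    nlinarith [mul_le_mul_of_nonneg_left hy1' (by linarith : (0:ℤ) ≤ -u2),
      sq_nonneg (w1 - x2), sq_nonneg x2, mul_pos hx2 hw1]
  have hu2 : u2 = 1 := le_antisymm h2 h3
  subst hu2
  constructor
  · have : u1 * x2 = 0 := by linarith
    rcases mul_eq_zero.mp this with h | h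
    · exact h
    · omega
  · rfl

/-- Case `A = w1`, `0 ≤ B ≤ w1`: impossible. -/
lemma x2_minimal_case2 (w1 x2 y1 u1 u2 : ℤ) (hw1 : 0 < w1) (hx2 : 0 < x2)
    (hx2' : 2 * x2 ≤ w1) (hy1 : x2 ≤ y1) (hy1' : y1 ≤ w1 - x2) (hu2 : u2 ≠ 0)
    (hA : u1 * w1 + u2 * y1 = w1) (hB0 : 0 ≤ u1 * x2 + u2 * w1)
    (hB1 : u1 * x2 + u2 * w1 ≤ w1) : False := by
  rcases lt_or_gt_of_ne hu2 with h | h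
  · have hneg : u2 ≤ -1 := by omega
    have h1 : u1 * x2 ≥ -u2 * w1 := by linarith
    have h2 : u1 ≥ -2 * u2 := by nlinarith
    nlinarith [mul_le_mul_of_nonneg_left hy1' (by linarith : (0:ℤ) ≤ -u2)]
  · have hpos : 1 ≤ u2 := by omega
    have hu1 : u1 ≤ 0 := by nlinarith
    have h2 : 2 * (u2 - 1) ≤ -u1 := by nlinarith
    nlinarith [mul_le_mul_of_nonneg_left hy1' (by linarith : (0:ℤ) ≤ u2)]

/-- Case `B - A = w1`, `A ≤ 0 ≤ B`: forces `u1 = -1`, `u2 = 1`, `y1 = w1 - x2`. -/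
lemma x2_minimal_case3 (w1 x2 y1 u1 u2 : ℤ) (hw1 : 0 < w1) (hx2 : 0 < x2)
    (hx2' : 2 * x2 ≤ w1) (hy1 : x2 ≤ y1) (hy1' : y1 ≤ w1 - x2)
    (hC : (u1 * x2 + u2 * w1) - (u1 * w1 + u2 * y1) = w1)
    (hA : u1 * w1 + u2 * y1 ≤ 0) (hB : 0 ≤ u1 * x2 + u2 * w1) :
    u1 = -1 ∧ u2 = 1 ∧ y1 = w1 - x2 := by
  have hu2 : 1 ≤ u2 := by
    by_contra h
    push_neg at h
    have h0 : u2 ≤ 0 := by omega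
    have h1 : u1 * (w1 - x2) ≤ -w1 := by nlinarith
    have h2 : u1 ≤ -1 := by nlinarith
    nlinarith
  have hu1 : u1 ≤ -1 := by nlinarith
  have e1 : (0:ℤ) ≤ (-u1 - 1) * (w1 - x2) := by
    apply mul_nonneg <;> omega
  have e2 : (0:ℤ) ≤ u2 * (w1 - y1) - x2 := by nlinarith
  have esum : (-u1 - 1) * (w1 - x2) + (u2 * (w1 - y1) - x2) = 0 := by ring_nf; linarith [hC]
  have e1' : (-u1 - 1) * (w1 - x2) = 0 := by omega
  have hu1' : u1 = -1 := by
    rcases mul_eq_zero.mp e1' with h | h <;> omega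
  have e2' : u2 * (w1 - y1) = x2 := by omega
  have e3 : (u2 - 1) * (w1 - y1) = x2 - (w1 - y1) := by ring_nf; linarith [e2']
  have hu2' : u2 = 1 := by nlinarith
  refine ⟨hu1', hu2', by nlinarith⟩

set_option maxHeartbeats 8000000 in
/-- For the triangle `conv((0,0),(w1,y1),(x2,w1))` with `0 < x2 ≤ w1/2` and
`x2 ≤ y1 ≤ w1 - x2`, if a dual vector `u = (u1,u2)` linearly independent from `(1,0)` maps
the vertices onto `{n, n+m, n+w1}` with `0 ≤ m ≤ w1`, then `x2 ≤ m ≤ w1 - x2`. -/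
theorem x2_minimal (w1 x2 y1 u1 u2 n m : ℤ)
    (hw1 : 0 < w1) (hx2 : 0 < x2) (hx2' : 2 * x2 ≤ w1)
    (hy1 : x2 ≤ y1) (hy1' : y1 ≤ w1 - x2)
    (hu2 : u2 ≠ 0)
    (him : ({0, u1 * w1 + u2 * y1, u1 * x2 + u2 * w1} : Set ℤ) = {n, n + m, n + w1})
    (hm0 : 0 ≤ m) (hm1 : m ≤ w1) :
    x2 ≤ m ∧ m ≤ w1 - x2 := by
  obtain ⟨A, hA⟩ : ∃ A, A = u1 * w1 + u2 * y1 := ⟨_, rfl⟩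
  obtain ⟨B, hB⟩ : ∃ B, B = u1 * x2 + u2 * w1 := ⟨_, rfl⟩
  rw [← hA, ← hB] at him
  have e0 : (0:ℤ) = n ∨ (0:ℤ) = n + m ∨ (0:ℤ) = n + w1 := by
    have h : (0:ℤ) ∈ ({n, n + m, n + w1} : Set ℤ) := him ▸ (by simp : (0:ℤ) ∈ ({0, A, B} : Set ℤ))
    simpa using h
  have eA : A = n ∨ A = n + m ∨ A = n + w1 := by
    have h : A ∈ ({n, n + m, n + w1} : Set ℤ) := him ▸ (by simp : A ∈ ({0, A, B} : Set ℤ))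
    simpa using h
  have eB : B = n ∨ B = n + m ∨ B = n + w1 := by
    have h : B ∈ ({n, n + m, n + w1} : Set ℤ) := him ▸ (by simp : B ∈ ({0, A, B} : Set ℤ))
    simpa using h
  have fn : n = 0 ∨ n = A ∨ n = B := by
    have h : n ∈ ({0, A, B} : Set ℤ) := him.symm ▸ (by simp : n ∈ ({n, n + m, n + w1} : Set ℤ))
    simpa using h
  have fm : n + m = 0 ∨ n + m = A ∨ n + m = B := by
    have h : n + m ∈ ({0, A, B} : Set ℤ) :=
      him.symm ▸ (by simp : n + m ∈ ({n, n + m, n + w1} : Set ℤ))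
    simpa using h
  have fw : n + w1 = 0 ∨ n + w1 = A ∨ n + w1 = B := by
    have h : n + w1 ∈ ({0, A, B} : Set ℤ) :=
      him.symm ▸ (by simp : n + w1 ∈ ({n, n + m, n + w1} : Set ℤ))
    simpa using h
  have hD : (B = w1 ∧ 0 ≤ A ∧ A ≤ w1 ∧ (m = A ∨ A = 0 ∨ A = w1))
      ∨ (A = w1 ∧ 0 ≤ B ∧ B ≤ w1)
      ∨ (B - A = w1 ∧ A ≤ 0 ∧ 0 ≤ B ∧ m = -A)
      ∨ (A - B = w1 ∧ B ≤ 0 ∧ 0 ≤ A ∧ m = -B)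
      ∨ (A = -w1 ∧ -w1 ≤ B ∧ B ≤ 0)
      ∨ (B = -w1 ∧ -w1 ≤ A ∧ A ≤ 0 ∧ (m = A + w1 ∨ A = 0 ∨ A = -w1)) := by
    clear hA hB him hu2
    rcases e0 with h0 | h0 | h0 <;> rcases eA with ha | ha | ha <;>
      rcases eB with hb | hb | hb <;> omega
  clear e0 eA eB fn fm fw him
  subst hA
  subst hB
  rcases hD with ⟨c1, c2, c3, c4⟩ | ⟨c1, c2, c3⟩ | ⟨c1, c2, c3, c4⟩ |
      ⟨c1, c2, c3, c4⟩ | ⟨c1, c2, c3⟩ | ⟨c1, c2, c3, c4⟩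
  · -- B = w1
    obtain ⟨g1, g2⟩ := x2_minimal_case1 w1 x2 y1 u1 u2 hw1 hx2 hx2' hy1 hy1' c1 c2 c3
    subst g1; subst g2
    omega
  · -- A = w1 : impossible
    exact absurd (x2_minimal_case2 w1 x2 y1 u1 u2 hw1 hx2 hx2' hy1 hy1' hu2 c1 c2 c3) (by simp)
  · -- B - A = w1
    obtain ⟨g1, g2, g3⟩ := x2_minimal_case3 w1 x2 y1 u1 u2 hw1 hx2 hx2' hy1 hy1'
      (by linarith) c2 c3
    subst g1; subst g2
    omega
  · -- A - B = w1 : apply case3 to -u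
    obtain ⟨g1, g2, g3⟩ := x2_minimal_case3 w1 x2 y1 (-u1) (-u2) hw1 hx2 hx2' hy1 hy1'
      (by ring_nf; linarith) (by linarith) (by linarith)
    have g1' : u1 = 1 := by omega
    have g2' : u2 = -1 := by omega
    subst g1'; subst g2'
    omega
  · -- A = -w1 : impossible, apply case2 to -u
    exact absurd (x2_minimal_case2 w1 x2 y1 (-u1) (-u2) hw1 hx2 hx2' hy1 hy1'
      (by simpa using hu2) (by linarith) (by linarith) (by linarith)) (by simp)
  · -- B = -w1 : apply case1 to -u
    obtain ⟨g1, g2⟩ := x2_minimal_case1 w1 x2 y1 (-u1) (-u2) hw1 hx2 hx2' hy1 hy1'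
      (by linarith) (by linarith) (by linarith)
    have g1' : u1 = 0 := by omega
    have g2' : u2 = -1 := by omega
    subst g1'; subst g2'
    omega
end

section
/- Let w1 < w2 be positive integers and consider T = conv((0,0),(w1,y1),(x2,w2)) with 0 < x2 ≤ w1/2, 0 ≤ y1 ≤ w1 - x2, and T' = conv((0,y0'),(w1,0),(x2,w2)) with 1 < x2 < w1/2, 0 < y0' < x2. Then there is no affine unimodular map of ℤ² taking T to T'. -/
/-- No integer `k` satisfies `k * D = N` when `0 < N < D`. -/
lemma no_div (k D N : ℤ) (hN : 0 < N) (hND : N < D) : k * D ≠ N := by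
  intro h
  rcases le_or_gt k 0 with hk | hk
  · nlinarith
  · nlinarith

lemma caseA (w1 w2 x2 y1 y0' a b c d : ℤ)
    (hw1 : 0 < w1) (hw12 : w1 < w2) (hx2 : 0 < x2) (hx2le : 2 * x2 ≤ w1)
    (hy1 : 0 ≤ y1) (hy1' : y1 ≤ w1 - x2) (hx2' : 1 < x2) (hx2lt : 2 * x2 < w1)
    (hy0 : 0 < y0') (hy0' : y0' < x2)
    (hdet : a * d - b * c = 1 ∨ a * d - b * c = -1)
    (r1 : a * w1 + b * y1 = w1) (r2 : c * w1 + d * y1 = -y0')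
    (r3 : a * x2 + b * w2 = x2) (r4 : c * x2 + d * w2 = w2 - y0') : False := by
  have hD : 0 < w1 * w2 - y1 * x2 := by nlinarith
  have hb0 : b * (w1 * w2 - y1 * x2) = 0 := by linear_combination w1 * r3 - x2 * r1
  have hb : b = 0 := by
    rcases mul_eq_zero.mp hb0 with h | h
    · exact h
    · linarith
  have ha : a = 1 := by
    have h' : a * w1 = 1 * w1 := by
      rw [hb] at r1; linarith
    exact mul_right_cancel₀ hw1.ne' h'
  rcases hdet with hd1 | hd1
  · have hd : d = 1 := by linear_combination hd1 - d * ha + c * hb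
    exact no_div (-c) w1 (y0' + y1) (by linarith) (by linarith)
      (by linear_combination -r2 + y1 * hd)
  · have hd : d = -1 := by linear_combination hd1 - d * ha + c * hb
    have h4 : c * x2 = 2 * w2 - y0' := by linear_combination r4 - w2 * hd
    have h2 : c * w1 = y1 - y0' := by linear_combination r2 - y1 * hd
    have hc : 1 ≤ c := by nlinarith
    nlinarith

lemma caseB (w1 w2 x2 y1 y0' a b c d : ℤ)
    (hw1 : 0 < w1) (hw12 : w1 < w2) (hx2 : 0 < x2) (hx2le : 2 * x2 ≤ w1)
    (hy1 : 0 ≤ y1) (hy1' : y1 ≤ w1 - x2) (hx2' : 1 < x2) (hx2lt : 2 * x2 < w1)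
    (hy0 : 0 < y0') (hy0' : y0' < x2)
    (hdet : a * d - b * c = 1 ∨ a * d - b * c = -1)
    (r1 : a * w1 + b * y1 = x2) (r2 : c * w1 + d * y1 = w2 - y0')
    (r3 : a * x2 + b * w2 = w1) (r4 : c * x2 + d * w2 = -y0') : False := by
  have hD : 0 < w1 * w2 - y1 * x2 := by nlinarith
  have key : (a * d - b * c) * (w1 * w2 - y1 * x2) = -(x2 * y0') - w1 * w2 + w1 * y0' := by
    linear_combination (c * x2 + d * w2) * r1 + x2 * r4 - (c * w1 + d * y1) * r3 - w1 * r2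
  rcases hdet with hd1 | hd1
  · have keq : w1 * w2 - y1 * x2 = -(x2 * y0') - w1 * w2 + w1 * y0' := by
      linear_combination key - (w1 * w2 - y1 * x2) * hd1
    have t1 : y1 * x2 ≤ (w1 - x2) * x2 := mul_le_mul_of_nonneg_right hy1' hx2.le
    have t2 : y0' * (w1 - x2) ≤ x2 * (w1 - x2) :=
      mul_le_mul_of_nonneg_right hy0'.le (by linarith)
    have t3 : (2 * x2) * (w1 - x2) ≤ w1 * (w1 - x2) :=
      mul_le_mul_of_nonneg_right hx2le (by linarith)
    have t4 : w1 * (w1 - x2) ≤ w1 * w2 := mul_le_mul_of_nonneg_left (by linarith) hw1.le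
    have t5 : 0 < w1 * w2 := mul_pos hw1 (by linarith)
    linarith
  · have hrel : y1 * x2 = w1 * y0' - x2 * y0' := by
      linear_combination key - (w1 * w2 - y1 * x2) * hd1
    have hdd : d * (w1 * w2 - y1 * x2) = -(y0' * w1 + (w2 - y0') * x2) := by
      linear_combination w1 * r4 - x2 * r2
    have hN : 0 < y0' * w1 + (w2 - y0') * x2 := by
      nlinarith [mul_pos hy0 hw1, mul_pos (show (0:ℤ) < w2 - y0' by linarith) hx2]
    have hND : y0' * w1 + (w2 - y0') * x2 < w1 * w2 - y1 * x2 := by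
      have t : 0 < (w1 - x2) * (w2 - 2 * y0') :=
        mul_pos (by linarith) (by linarith)
      linarith
    exact no_div (-d) _ _ hN hND (by linear_combination -hdd)

lemma caseC (w1 w2 x2 y1 y0' a b c d : ℤ)
    (hw1 : 0 < w1) (hw12 : w1 < w2) (hx2 : 0 < x2) (hx2le : 2 * x2 ≤ w1)
    (hy1 : 0 ≤ y1) (hy1' : y1 ≤ w1 - x2) (hx2' : 1 < x2) (hx2lt : 2 * x2 < w1)
    (hy0 : 0 < y0') (hy0' : y0' < x2)
    (r1 : a * w1 + b * y1 = -w1) (r3 : a * x2 + b * w2 = x2 - w1) : False := by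
  have hbD : (-b) * (w1 * w2 - y1 * x2) = w1 * w1 - 2 * (w1 * x2) := by
    linear_combination x2 * r1 - w1 * r3
  have hN : 0 < w1 * w1 - 2 * (w1 * x2) := by
    nlinarith [mul_pos hw1 (show (0:ℤ) < w1 - 2 * x2 by linarith)]
  have hND : w1 * w1 - 2 * (w1 * x2) < w1 * w2 - y1 * x2 := by
    have t1 : 0 < w1 * (w2 - w1) := mul_pos hw1 (by linarith)
    have t2 : 0 < x2 * (2 * w1 - y1) := mul_pos hx2 (by linarith)
    linarith
  exact no_div (-b) _ _ hN hND hbD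

lemma caseD (w1 w2 x2 y1 y0' a b c d : ℤ)
    (hw1 : 0 < w1) (hw12 : w1 < w2) (hx2 : 0 < x2) (hx2le : 2 * x2 ≤ w1)
    (hy1 : 0 ≤ y1) (hy1' : y1 ≤ w1 - x2) (hx2' : 1 < x2) (hx2lt : 2 * x2 < w1)
    (hy0 : 0 < y0') (hy0' : y0' < x2)
    (r2 : c * w1 + d * y1 = w2) (r4 : c * x2 + d * w2 = y0') : False := by
  have hdd : (-d) * (w1 * w2 - y1 * x2) = w2 * x2 - y0' * w1 := by
    linear_combination x2 * r2 - w1 * r4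
  have hN : 0 < w2 * x2 - y0' * w1 := by
    have t1 : 0 < x2 * (w2 - w1) := mul_pos hx2 (by linarith)
    have t2 : 0 < w1 * (x2 - y0') := mul_pos hw1 (by linarith)
    linarith
  have hND : w2 * x2 - y0' * w1 < w1 * w2 - y1 * x2 := by
    have t1 : y1 * x2 ≤ (w1 - x2) * x2 := mul_le_mul_of_nonneg_right hy1' hx2.le
    have t2 : 0 < (w1 - x2) * (w2 - x2) := mul_pos (by linarith) (by linarith)
    have t3 : 0 < y0' * w1 := mul_pos hy0 hw1
    linarith
  exact no_div (-d) _ _ hN hND hdd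

lemma caseE (w1 w2 x2 y1 y0' a b c d : ℤ)
    (hw1 : 0 < w1) (hw12 : w1 < w2) (hx2 : 0 < x2) (hx2le : 2 * x2 ≤ w1)
    (hy1 : 0 ≤ y1) (hy1' : y1 ≤ w1 - x2) (hx2' : 1 < x2) (hx2lt : 2 * x2 < w1)
    (hy0 : 0 < y0') (hy0' : y0' < x2)
    (r1 : a * w1 + b * y1 = -x2) (r3 : a * x2 + b * w2 = w1 - x2) : False := by
  have hbD : b * (w1 * w2 - y1 * x2) = w1 * w1 - w1 * x2 + x2 * x2 := by
    linear_combination w1 * r3 - x2 * r1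
  have hN : 0 < w1 * w1 - w1 * x2 + x2 * x2 := by
    have t1 : 0 < w1 * (w1 - x2) := mul_pos hw1 (by linarith)
    have t2 : 0 < x2 * x2 := mul_pos hx2 hx2
    linarith
  have hND : w1 * w1 - w1 * x2 + x2 * x2 < w1 * w2 - y1 * x2 := by
    have t1 : 0 < w1 * (w2 - w1) := mul_pos hw1 (by linarith)
    have t2 : 0 ≤ x2 * (w1 - x2 - y1) := mul_nonneg hx2.le (by linarith)
    linarith
  exact no_div b _ _ hN hND hbD

lemma caseF (w1 w2 x2 y1 y0' a b c d : ℤ)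
    (hw1 : 0 < w1) (hw12 : w1 < w2) (hx2 : 0 < x2) (hx2le : 2 * x2 ≤ w1)
    (hy1 : 0 ≤ y1) (hy1' : y1 ≤ w1 - x2) (hx2' : 1 < x2) (hx2lt : 2 * x2 < w1)
    (hy0 : 0 < y0') (hy0' : y0' < x2)
    (r2 : c * w1 + d * y1 = -w2) (r4 : c * x2 + d * w2 = y0' - w2) : False := by
  have hdd : (-d) * (w1 * w2 - y1 * x2) = w2 * w1 - w2 * x2 - y0' * w1 := by
    linear_combination x2 * r2 - w1 * r4
  have hN : 0 < w2 * w1 - w2 * x2 - y0' * w1 := by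
    have t1 : 0 < w2 * (w1 - 2 * x2) := mul_pos (by linarith) (by linarith)
    have t2 : 0 < x2 * (w2 - w1) := mul_pos hx2 (by linarith)
    have t3 : 0 < w1 * (x2 - y0') := mul_pos hw1 (by linarith)
    linarith
  have hND : w2 * w1 - w2 * x2 - y0' * w1 < w1 * w2 - y1 * x2 := by
    have t1 : 0 < x2 * (w2 - y1) := mul_pos hx2 (by linarith)
    have t2 : 0 < y0' * w1 := mul_pos hy0 hw1
    linarith
  exact no_div (-d) _ _ hN hND hdd

/-- Triangles of type (2) and type (3) in `S_{w1,w2}` are never affine equivalent: there is no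
affine unimodular map of `ℤ²` taking `conv((0,0),(w1,y1),(x2,w2))` to
`conv((0,y0'),(w1,0),(x2,w2))`. -/
theorem type2_not_equiv_type3 (w1 w2 x2 y1 y0' : ℤ)
    (hw1 : 0 < w1) (hw12 : w1 < w2)
    (hx2 : 0 < x2) (hx2le : 2 * x2 ≤ w1)
    (hy1 : 0 ≤ y1) (hy1' : y1 ≤ w1 - x2)
    (hx2' : 1 < x2) (hx2lt : 2 * x2 < w1)
    (hy0 : 0 < y0') (hy0' : y0' < x2) :
    ¬ ∃ a b c d e f : ℤ, (a * d - b * c = 1 ∨ a * d - b * c = -1) ∧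
      (fun p : ℤ × ℤ => (a * p.1 + b * p.2 + e, c * p.1 + d * p.2 + f)) ''
        {(0, 0), (w1, y1), (x2, w2)} = {(0, y0'), (w1, 0), (x2, w2)} := by
  rintro ⟨a, b, c, d, e, f, hdet, h⟩
  have h1 : ((0 : ℤ), y0') ∈ (fun p : ℤ × ℤ => (a * p.1 + b * p.2 + e, c * p.1 + d * p.2 + f)) ''
      {((0:ℤ), (0:ℤ)), (w1, y1), (x2, w2)} := by rw [h]; simp
  have h2 : ((w1 : ℤ), (0 : ℤ)) ∈ (fun p : ℤ × ℤ => (a * p.1 + b * p.2 + e, c * p.1 + d * p.2 + f)) ''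
      {((0:ℤ), (0:ℤ)), (w1, y1), (x2, w2)} := by rw [h]; simp
  have h3 : ((x2 : ℤ), (w2 : ℤ)) ∈ (fun p : ℤ × ℤ => (a * p.1 + b * p.2 + e, c * p.1 + d * p.2 + f)) ''
      {((0:ℤ), (0:ℤ)), (w1, y1), (x2, w2)} := by rw [h]; simp
  obtain ⟨p1, hp1, he1⟩ := h1
  obtain ⟨p2, hp2, he2⟩ := h2
  obtain ⟨p3, hp3, he3⟩ := h3
  simp only [Set.mem_insert_iff, Set.mem_singleton_iff] at hp1 hp2 hp3
  rcases hp1 with rfl | rfl | rfl <;> rcases hp2 with rfl | rfl | rfl <;>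
    rcases hp3 with rfl | rfl | rfl <;>
    simp only [Prod.mk.injEq, mul_zero, zero_add, add_zero] at he1 he2 he3 <;>
    obtain ⟨e1, e2⟩ := he1 <;> obtain ⟨e3, e4⟩ := he2 <;> obtain ⟨e5, e6⟩ := he3 <;>
    first
    | linarith
    | exact caseA w1 w2 x2 y1 y0' a b c d hw1 hw12 hx2 hx2le hy1 hy1' hx2' hx2lt hy0 hy0'
        hdet (by linarith) (by linarith) (by linarith) (by linarith)
    | exact caseB w1 w2 x2 y1 y0' a b c d hw1 hw12 hx2 hx2le hy1 hy1' hx2' hx2lt hy0 hy0'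
        hdet (by linarith) (by linarith) (by linarith) (by linarith)
    | exact caseC w1 w2 x2 y1 y0' a b c d hw1 hw12 hx2 hx2le hy1 hy1' hx2' hx2lt hy0 hy0'
        (by linarith) (by linarith)
    | exact caseD w1 w2 x2 y1 y0' a b c d hw1 hw12 hx2 hx2le hy1 hy1' hx2' hx2lt hy0 hy0'
        (by linarith) (by linarith)
    | exact caseE w1 w2 x2 y1 y0' a b c d hw1 hw12 hx2 hx2le hy1 hy1' hx2' hx2lt hy0 hy0'
        (by linarith) (by linarith)
    | exact caseF w1 w2 x2 y1 y0' a b c d hw1 hw12 hx2 hx2le hy1 hy1' hx2' hx2lt hy0 hy0'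
        (by linarith) (by linarith)
end

section
/- The generating function identity ∑_{n≥0} c_n t^n = (1 − t⁸)/((1 − t²)³(1 − t)³) holds, where c_n = #(nQ ∩ ℤ⁴) and Q ⊂ ℝ⁴ is the simplex with vertices (1/2,0,0,0), (0,1/2,0,0), (0,0,1/2,0), (0,0,0,1), (−1,−1,−1,−1). -/
open PowerSeries Pointwise Finset

/-- The simplex `Q ⊂ ℝ⁴` with vertices `(1/2,0,0,0)`, `(0,1/2,0,0)`, `(0,0,1/2,0)`,
`(0,0,0,1)`, `(-1,-1,-1,-1)`. -/
noncomputable def Qsimplex : Set (Fin 4 → ℝ) :=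
  convexHull ℝ {(fun i => if i = 0 then (1/2 : ℝ) else 0),
    (fun i => if i = 1 then (1/2 : ℝ) else 0),
    (fun i => if i = 2 then (1/2 : ℝ) else 0),
    (fun i => if i = 3 then (1 : ℝ) else 0),
    (fun _ => (-1 : ℝ))}

lemma mem_Qsimplex (y : Fin 4 → ℝ) :
    y ∈ Qsimplex ↔
      (-6*y 0 + 2*y 1 + 2*y 2 + y 3 ≤ 1 ∧
      2*y 0 - 6*y 1 + 2*y 2 + y 3 ≤ 1 ∧
      2*y 0 + 2*y 1 - 6*y 2 + y 3 ≤ 1 ∧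
      2*y 0 + 2*y 1 + 2*y 2 - 7*y 3 ≤ 1 ∧
      2*y 0 + 2*y 1 + 2*y 2 + y 3 ≤ 1) := by
  constructor
  · intro hy
    have hH : Qsimplex ⊆ {v : Fin 4 → ℝ |
        -6*v 0 + 2*v 1 + 2*v 2 + v 3 ≤ 1 ∧
        2*v 0 - 6*v 1 + 2*v 2 + v 3 ≤ 1 ∧
        2*v 0 + 2*v 1 - 6*v 2 + v 3 ≤ 1 ∧
        2*v 0 + 2*v 1 + 2*v 2 - 7*v 3 ≤ 1 ∧
        2*v 0 + 2*v 1 + 2*v 2 + v 3 ≤ 1} := by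
      apply convexHull_min
      · intro v hv
        simp only [Set.mem_insert_iff, Set.mem_singleton_iff] at hv
        rcases hv with rfl | rfl | rfl | rfl | rfl <;> (simp only [Set.mem_setOf_eq]; norm_num [Fin.ext_iff])
      · rintro u ⟨h1, h2, h3, h4, h5⟩ v ⟨g1, g2, g3, g4, g5⟩ a b ha hb hab
        simp only [Set.mem_setOf_eq, Pi.add_apply, Pi.smul_apply, smul_eq_mul]
        refine ⟨?_, ?_, ?_, ?_, ?_⟩ <;> nlinarith
    exact hH hy
  · rintro ⟨h1, h2, h3, h4, h5⟩
    set w : Fin 5 → ℝ := ![(1 - (-6*y 0 + 2*y 1 + 2*y 2 + y 3))/4,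
      (1 - (2*y 0 - 6*y 1 + 2*y 2 + y 3))/4,
      (1 - (2*y 0 + 2*y 1 - 6*y 2 + y 3))/4,
      (1 - (2*y 0 + 2*y 1 + 2*y 2 - 7*y 3))/8,
      (1 - (2*y 0 + 2*y 1 + 2*y 2 + y 3))/8] with hw
    set z : Fin 5 → (Fin 4 → ℝ) := ![(fun i => if i = 0 then (1/2 : ℝ) else 0),
      (fun i => if i = 1 then (1/2 : ℝ) else 0),
      (fun i => if i = 2 then (1/2 : ℝ) else 0),
      (fun i => if i = 3 then (1 : ℝ) else 0),
      (fun _ => (-1 : ℝ))] with hz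
    have hsum : ∑ i, w i = 1 := by
      simp [hw, Fin.sum_univ_five]; ring
    have hcm : Finset.univ.centerMass w z = ∑ i, w i • z i :=
      Finset.centerMass_eq_of_sum_1 _ _ hsum
    have hy' : Finset.univ.centerMass w z = y := by
      rw [hcm]
      funext j
      rw [Fin.sum_univ_five]
      fin_cases j <;>
        simp [hw, hz, Pi.add_apply, Pi.smul_apply, smul_eq_mul] <;> ring
    rw [← hy']
    apply Finset.centerMass_mem_convexHull
    · intro i _
      fin_cases i <;> simp [hw] <;> linarith
    · rw [hsum]; norm_num
    · intro i _
      fin_cases i <;> simp [hz, Qsimplex]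

/-- The number of lattice points of `ℤ⁴` in the dilate `nQ`. -/
noncomputable def latticeCount (n : ℕ) : ℕ :=
  Set.ncard {x : Fin 4 → ℤ | (fun i => (x i : ℝ)) ∈ (n : ℝ) • Qsimplex}

lemma mem_dilate (n : ℕ) (hn : 1 ≤ n) (x : Fin 4 → ℤ) :
    ((fun i => (x i : ℝ)) ∈ (n : ℝ) • Qsimplex) ↔
      (-6*x 0 + 2*x 1 + 2*x 2 + x 3 ≤ (n:ℤ) ∧
       2*x 0 - 6*x 1 + 2*x 2 + x 3 ≤ (n:ℤ) ∧
       2*x 0 + 2*x 1 - 6*x 2 + x 3 ≤ (n:ℤ) ∧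
       2*x 0 + 2*x 1 + 2*x 2 - 7*x 3 ≤ (n:ℤ) ∧
       2*x 0 + 2*x 1 + 2*x 2 + x 3 ≤ (n:ℤ)) := by
  have hn0 : (0:ℝ) < (n:ℝ) := by exact_mod_cast hn
  rw [Set.mem_smul_set_iff_inv_smul_mem₀ (ne_of_gt hn0), mem_Qsimplex]
  simp only [Pi.smul_apply, smul_eq_mul]
  have key : ∀ c0 c1 c2 c3 : ℤ,
      ((c0:ℝ) * ((n:ℝ)⁻¹ * ↑(x 0)) + (c1:ℝ) * ((n:ℝ)⁻¹ * ↑(x 1)) + (c2:ℝ) * ((n:ℝ)⁻¹ * ↑(x 2)) +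
        (c3:ℝ) * ((n:ℝ)⁻¹ * ↑(x 3)) ≤ 1 ↔ c0 * x 0 + c1 * x 1 + c2 * x 2 + c3 * x 3 ≤ (n:ℤ)) := by
    intro c0 c1 c2 c3
    rw [show (c0:ℝ) * ((n:ℝ)⁻¹ * ↑(x 0)) + (c1:ℝ) * ((n:ℝ)⁻¹ * ↑(x 1)) + (c2:ℝ) * ((n:ℝ)⁻¹ * ↑(x 2)) +
        (c3:ℝ) * ((n:ℝ)⁻¹ * ↑(x 3)) = ((c0 * x 0 + c1 * x 1 + c2 * x 2 + c3 * x 3 : ℤ):ℝ) / (n:ℝ) by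
      push_cast; field_simp; try ring]
    rw [div_le_one hn0]
    exact_mod_cast Iff.rfl
  have k1 := key (-6) 2 2 1
  have k2 := key 2 (-6) 2 1
  have k3 := key 2 2 (-6) 1
  have k4 := key 2 2 2 (-7)
  have k5 := key 2 2 2 1
  push_cast at k1 k2 k3 k4 k5
  refine and_congr ?_ (and_congr ?_ (and_congr ?_ (and_congr ?_ ?_)))
  · exact ⟨fun h => by have := k1.1 (by linarith); linarith, fun h => by have := k1.2 (by linarith); linarith⟩
  · exact ⟨fun h => by have := k2.1 (by linarith); linarith, fun h => by have := k2.2 (by linarith); linarith⟩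
  · exact ⟨fun h => by have := k3.1 (by linarith); linarith, fun h => by have := k3.2 (by linarith); linarith⟩
  · exact ⟨fun h => by have := k4.1 (by linarith); linarith, fun h => by have := k4.2 (by linarith); linarith⟩
  · exact ⟨fun h => by have := k5.1 (by linarith); linarith, fun h => by have := k5.2 (by linarith); linarith⟩

def T1 (n : ℕ) : Finset ℕ := (range 8).filter (fun r => r = n)
def T2 (n : ℕ) : Finset (ℕ × ℕ) := ((range (n+1)) ×ˢ range 8).filter (fun p => 2*p.1 + p.2 = n)
def T3 (n : ℕ) : Finset (ℕ × ℕ × ℕ) :=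
  ((range (n+1)) ×ˢ (range (n+1)) ×ˢ range 8).filter (fun p => 2*p.1 + 2*p.2.1 + p.2.2 = n)
def T4 (n : ℕ) : Finset (ℕ × ℕ × ℕ × ℕ) :=
  ((range (n+1)) ×ˢ (range (n+1)) ×ˢ (range (n+1)) ×ˢ range 8).filter
    (fun p => 2*p.1 + 2*p.2.1 + 2*p.2.2.1 + p.2.2.2 = n)
def T5 (n : ℕ) : Finset (ℕ × ℕ × ℕ × ℕ × ℕ) :=
  ((range (n+1)) ×ˢ (range (n+1)) ×ˢ (range (n+1)) ×ˢ (range (n+1)) ×ˢ range 8).filter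
    (fun p => p.1 + 2*p.2.1 + 2*p.2.2.1 + 2*p.2.2.2.1 + p.2.2.2.2 = n)
def T6 (n : ℕ) : Finset (ℕ × ℕ × ℕ × ℕ × ℕ × ℕ) :=
  ((range (n+1)) ×ˢ (range (n+1)) ×ˢ (range (n+1)) ×ˢ (range (n+1)) ×ˢ (range (n+1)) ×ˢ range 8).filter
    (fun p => p.1 + p.2.1 + 2*p.2.2.1 + 2*p.2.2.2.1 + 2*p.2.2.2.2.1 + p.2.2.2.2.2 = n)

lemma mem_T6 {n : ℕ} {p : ℕ × ℕ × ℕ × ℕ × ℕ × ℕ} : p ∈ T6 n ↔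
    (p.2.2.2.2.2 < 8 ∧ p.1 + p.2.1 + 2*p.2.2.1 + 2*p.2.2.2.1 + 2*p.2.2.2.2.1 + p.2.2.2.2.2 = n) := by
  simp [T6, Finset.mem_filter, Finset.mem_product, Finset.mem_range]; omega

lemma mem_T5 {n : ℕ} {p : ℕ × ℕ × ℕ × ℕ × ℕ} : p ∈ T5 n ↔
    (p.2.2.2.2 < 8 ∧ p.1 + 2*p.2.1 + 2*p.2.2.1 + 2*p.2.2.2.1 + p.2.2.2.2 = n) := by
  simp [T5, Finset.mem_filter, Finset.mem_product, Finset.mem_range]; omega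

lemma mem_T4 {n : ℕ} {p : ℕ × ℕ × ℕ × ℕ} : p ∈ T4 n ↔
    (p.2.2.2 < 8 ∧ 2*p.1 + 2*p.2.1 + 2*p.2.2.1 + p.2.2.2 = n) := by
  simp [T4, Finset.mem_filter, Finset.mem_product, Finset.mem_range]; omega

lemma mem_T3 {n : ℕ} {p : ℕ × ℕ × ℕ} : p ∈ T3 n ↔
    (p.2.2 < 8 ∧ 2*p.1 + 2*p.2.1 + p.2.2 = n) := by
  simp [T3, Finset.mem_filter, Finset.mem_product, Finset.mem_range]; omega

lemma mem_T2 {n : ℕ} {p : ℕ × ℕ} : p ∈ T2 n ↔ (p.2 < 8 ∧ 2*p.1 + p.2 = n) := by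
  simp [T2, Finset.mem_filter, Finset.mem_product, Finset.mem_range]; omega

lemma mem_T1 {n : ℕ} {r : ℕ} : r ∈ T1 n ↔ (r < 8 ∧ r = n) := by
  simp [T1, Finset.mem_filter, Finset.mem_range]
  split_ifs with h <;> simp <;> omega

lemma R6a (n : ℕ) (hn : 1 ≤ n) : (T6 n).card = (T5 n).card + (T6 (n-1)).card := by
  classical
  rw [← Finset.card_filter_add_card_filter_not (s := T6 n) (fun p => p.1 = 0)]
  congr 1
  · refine Finset.card_bij' (fun p _ => p.2) (fun q _ => (0, q)) ?_ ?_ ?_ ?_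
    · rintro ⟨a,b,c,d,e,r⟩ hp
      simp only [Finset.mem_filter, mem_T6] at hp; rw [mem_T5]; simp at hp ⊢ <;> omega
    · rintro ⟨b,c,d,e,r⟩ hq
      rw [mem_T5] at hq; simp only [Finset.mem_filter, mem_T6]; simp at hq ⊢ <;> omega
    · rintro ⟨a,b,c,d,e,r⟩ hp
      simp [Finset.mem_filter, mem_T6] at hp
      simp only [Prod.mk.injEq, and_true]; omega
    · rintro ⟨b,c,d,e,r⟩ hq; rfl
  · refine Finset.card_bij' (fun p _ => (p.1 - 1, p.2)) (fun q _ => (q.1 + 1, q.2)) ?_ ?_ ?_ ?_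
    · rintro ⟨a,b,c,d,e,r⟩ hp
      simp only [Finset.mem_filter, mem_T6] at hp; rw [mem_T6]; simp at hp ⊢ <;> omega
    · rintro ⟨a,b,c,d,e,r⟩ hq
      rw [mem_T6] at hq; simp only [Finset.mem_filter, mem_T6]; simp at hq ⊢ <;> omega
    · rintro ⟨a,b,c,d,e,r⟩ hp
      simp [Finset.mem_filter, mem_T6] at hp
      simp only [Prod.mk.injEq, and_true]; omega
    · rintro ⟨a,b,c,d,e,r⟩ hq
      rw [mem_T6] at hq
      simp only [Prod.mk.injEq, and_true]; omega

lemma R6b (n : ℕ) (hn : n < 1) : (T6 n).card = (T5 n).card := by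
  classical
  refine Finset.card_bij' (fun p _ => p.2) (fun q _ => (0, q)) ?_ ?_ ?_ ?_
  · rintro ⟨a,b,c,d,e,r⟩ hp
    rw [mem_T6] at hp; rw [mem_T5]; simp at hp ⊢ <;> omega
  · rintro ⟨b,c,d,e,r⟩ hq
    rw [mem_T5] at hq; rw [mem_T6]; simp at hq ⊢ <;> omega
  · rintro ⟨a,b,c,d,e,r⟩ hp
    rw [mem_T6] at hp; simp at hp
    simp only [Prod.mk.injEq, and_true]; omega
  · rintro ⟨b,c,d,e,r⟩ hq; rfl

lemma R5a (n : ℕ) (hn : 1 ≤ n) : (T5 n).card = (T4 n).card + (T5 (n-1)).card := by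
  classical
  rw [← Finset.card_filter_add_card_filter_not (s := T5 n) (fun p => p.1 = 0)]
  congr 1
  · refine Finset.card_bij' (fun p _ => p.2) (fun q _ => (0, q)) ?_ ?_ ?_ ?_
    · rintro ⟨a,b,c,d,r⟩ hp
      simp only [Finset.mem_filter, mem_T5] at hp; rw [mem_T4]; simp at hp ⊢ <;> omega
    · rintro ⟨b,c,d,r⟩ hq
      rw [mem_T4] at hq; simp only [Finset.mem_filter, mem_T5]; simp at hq ⊢ <;> omega
    · rintro ⟨a,b,c,d,r⟩ hp
      simp [Finset.mem_filter, mem_T5] at hp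
      simp only [Prod.mk.injEq, and_true]; omega
    · rintro ⟨b,c,d,r⟩ hq; rfl
  · refine Finset.card_bij' (fun p _ => (p.1 - 1, p.2)) (fun q _ => (q.1 + 1, q.2)) ?_ ?_ ?_ ?_
    · rintro ⟨a,b,c,d,r⟩ hp
      simp only [Finset.mem_filter, mem_T5] at hp; rw [mem_T5]; simp at hp ⊢ <;> omega
    · rintro ⟨a,b,c,d,r⟩ hq
      rw [mem_T5] at hq; simp only [Finset.mem_filter, mem_T5]; simp at hq ⊢ <;> omega
    · rintro ⟨a,b,c,d,r⟩ hp
      simp [Finset.mem_filter, mem_T5] at hp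
      simp only [Prod.mk.injEq, and_true]; omega
    · rintro ⟨a,b,c,d,r⟩ hq
      rw [mem_T5] at hq
      simp only [Prod.mk.injEq, and_true]; omega

lemma R5b (n : ℕ) (hn : n < 1) : (T5 n).card = (T4 n).card := by
  classical
  refine Finset.card_bij' (fun p _ => p.2) (fun q _ => (0, q)) ?_ ?_ ?_ ?_
  · rintro ⟨a,b,c,d,r⟩ hp
    rw [mem_T5] at hp; rw [mem_T4]; simp at hp ⊢ <;> omega
  · rintro ⟨b,c,d,r⟩ hq
    rw [mem_T4] at hq; rw [mem_T5]; simp at hq ⊢ <;> omega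
  · rintro ⟨a,b,c,d,r⟩ hp
    rw [mem_T5] at hp; simp at hp
    simp only [Prod.mk.injEq, and_true]; omega
  · rintro ⟨b,c,d,r⟩ hq; rfl

lemma R4a (n : ℕ) (hn : 2 ≤ n) : (T4 n).card = (T3 n).card + (T4 (n-2)).card := by
  classical
  rw [← Finset.card_filter_add_card_filter_not (s := T4 n) (fun p => p.1 = 0)]
  congr 1
  · refine Finset.card_bij' (fun p _ => p.2) (fun q _ => (0, q)) ?_ ?_ ?_ ?_
    · rintro ⟨a,b,c,r⟩ hp
      simp only [Finset.mem_filter, mem_T4] at hp; rw [mem_T3]; simp at hp ⊢ <;> omega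
    · rintro ⟨b,c,r⟩ hq
      rw [mem_T3] at hq; simp only [Finset.mem_filter, mem_T4]; simp at hq ⊢ <;> omega
    · rintro ⟨a,b,c,r⟩ hp
      simp [Finset.mem_filter, mem_T4] at hp
      simp only [Prod.mk.injEq, and_true]; omega
    · rintro ⟨b,c,r⟩ hq; rfl
  · refine Finset.card_bij' (fun p _ => (p.1 - 1, p.2)) (fun q _ => (q.1 + 1, q.2)) ?_ ?_ ?_ ?_
    · rintro ⟨a,b,c,r⟩ hp
      simp only [Finset.mem_filter, mem_T4] at hp; rw [mem_T4]; simp at hp ⊢ <;> omega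
    · rintro ⟨a,b,c,r⟩ hq
      rw [mem_T4] at hq; simp only [Finset.mem_filter, mem_T4]; simp at hq ⊢ <;> omega
    · rintro ⟨a,b,c,r⟩ hp
      simp [Finset.mem_filter, mem_T4] at hp
      simp only [Prod.mk.injEq, and_true]; omega
    · rintro ⟨a,b,c,r⟩ hq
      rw [mem_T4] at hq
      simp only [Prod.mk.injEq, and_true]; omega

lemma R4b (n : ℕ) (hn : n < 2) : (T4 n).card = (T3 n).card := by
  classical
  refine Finset.card_bij' (fun p _ => p.2) (fun q _ => (0, q)) ?_ ?_ ?_ ?_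
  · rintro ⟨a,b,c,r⟩ hp
    rw [mem_T4] at hp; rw [mem_T3]; simp at hp ⊢ <;> omega
  · rintro ⟨b,c,r⟩ hq
    rw [mem_T3] at hq; rw [mem_T4]; simp at hq ⊢ <;> omega
  · rintro ⟨a,b,c,r⟩ hp
    rw [mem_T4] at hp; simp at hp
    simp only [Prod.mk.injEq, and_true]; omega
  · rintro ⟨b,c,r⟩ hq; rfl

lemma R3a (n : ℕ) (hn : 2 ≤ n) : (T3 n).card = (T2 n).card + (T3 (n-2)).card := by
  classical
  rw [← Finset.card_filter_add_card_filter_not (s := T3 n) (fun p => p.1 = 0)]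
  congr 1
  · refine Finset.card_bij' (fun p _ => p.2) (fun q _ => (0, q)) ?_ ?_ ?_ ?_
    · rintro ⟨a,b,r⟩ hp
      simp only [Finset.mem_filter, mem_T3] at hp; rw [mem_T2]; simp at hp ⊢ <;> omega
    · rintro ⟨b,r⟩ hq
      rw [mem_T2] at hq; simp only [Finset.mem_filter, mem_T3]; simp at hq ⊢ <;> omega
    · rintro ⟨a,b,r⟩ hp
      simp [Finset.mem_filter, mem_T3] at hp
      simp only [Prod.mk.injEq, and_true]; omega
    · rintro ⟨b,r⟩ hq; rfl
  · refine Finset.card_bij' (fun p _ => (p.1 - 1, p.2)) (fun q _ => (q.1 + 1, q.2)) ?_ ?_ ?_ ?_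
    · rintro ⟨a,b,r⟩ hp
      simp only [Finset.mem_filter, mem_T3] at hp; rw [mem_T3]; simp at hp ⊢ <;> omega
    · rintro ⟨a,b,r⟩ hq
      rw [mem_T3] at hq; simp only [Finset.mem_filter, mem_T3]; simp at hq ⊢ <;> omega
    · rintro ⟨a,b,r⟩ hp
      simp [Finset.mem_filter, mem_T3] at hp
      simp only [Prod.mk.injEq, and_true]; omega
    · rintro ⟨a,b,r⟩ hq
      rw [mem_T3] at hq
      simp only [Prod.mk.injEq, and_true]; omega

lemma R3b (n : ℕ) (hn : n < 2) : (T3 n).card = (T2 n).card := by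
  classical
  refine Finset.card_bij' (fun p _ => p.2) (fun q _ => (0, q)) ?_ ?_ ?_ ?_
  · rintro ⟨a,b,r⟩ hp
    rw [mem_T3] at hp; rw [mem_T2]; simp at hp ⊢ <;> omega
  · rintro ⟨b,r⟩ hq
    rw [mem_T2] at hq; rw [mem_T3]; simp at hq ⊢ <;> omega
  · rintro ⟨a,b,r⟩ hp
    rw [mem_T3] at hp; simp at hp
    simp only [Prod.mk.injEq, and_true]; omega
  · rintro ⟨b,r⟩ hq; rfl

lemma R2a (n : ℕ) (hn : 2 ≤ n) : (T2 n).card = (T1 n).card + (T2 (n-2)).card := by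
  classical
  rw [← Finset.card_filter_add_card_filter_not (s := T2 n) (fun p => p.1 = 0)]
  congr 1
  · refine Finset.card_bij' (fun p _ => p.2) (fun q _ => (0, q)) ?_ ?_ ?_ ?_
    · rintro ⟨a,r⟩ hp
      simp only [Finset.mem_filter, mem_T2] at hp; rw [mem_T1]; simp at hp ⊢ <;> omega
    · rintro r hq
      rw [mem_T1] at hq; simp only [Finset.mem_filter, mem_T2]; simp at hq ⊢ <;> omega
    · rintro ⟨a,r⟩ hp
      simp [Finset.mem_filter, mem_T2] at hp
      simp only [Prod.mk.injEq, and_true]; omega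
    · rintro r hq; rfl
  · refine Finset.card_bij' (fun p _ => (p.1 - 1, p.2)) (fun q _ => (q.1 + 1, q.2)) ?_ ?_ ?_ ?_
    · rintro ⟨a,r⟩ hp
      simp only [Finset.mem_filter, mem_T2] at hp; rw [mem_T2]; simp at hp ⊢ <;> omega
    · rintro ⟨a,r⟩ hq
      rw [mem_T2] at hq; simp only [Finset.mem_filter, mem_T2]; simp at hq ⊢ <;> omega
    · rintro ⟨a,r⟩ hp
      simp [Finset.mem_filter, mem_T2] at hp
      simp only [Prod.mk.injEq, and_true]; omega
    · rintro ⟨a,r⟩ hq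
      rw [mem_T2] at hq
      simp only [Prod.mk.injEq, and_true]; omega

lemma R2b (n : ℕ) (hn : n < 2) : (T2 n).card = (T1 n).card := by
  classical
  refine Finset.card_bij' (fun p _ => p.2) (fun q _ => (0, q)) ?_ ?_ ?_ ?_
  · rintro ⟨a,r⟩ hp
    rw [mem_T2] at hp; rw [mem_T1]; simp at hp ⊢ <;> omega
  · rintro r hq
    rw [mem_T1] at hq; rw [mem_T2]; simp at hq ⊢ <;> omega
  · rintro ⟨a,r⟩ hp
    rw [mem_T2] at hp; simp at hp
    simp only [Prod.mk.injEq, and_true]; omega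
  · rintro r hq; rfl

noncomputable def SQ (n : ℕ) : Set (Fin 4 → ℤ) :=
  {x | -6*x 0 + 2*x 1 + 2*x 2 + x 3 ≤ (n:ℤ) ∧
       2*x 0 - 6*x 1 + 2*x 2 + x 3 ≤ (n:ℤ) ∧
       2*x 0 + 2*x 1 - 6*x 2 + x 3 ≤ (n:ℤ) ∧
       2*x 0 + 2*x 1 + 2*x 2 - 7*x 3 ≤ (n:ℤ) ∧
       2*x 0 + 2*x 1 + 2*x 2 + x 3 ≤ (n:ℤ)}

noncomputable def SQequiv (n : ℕ) : SQ n ≃ (T6 n : Set (ℕ × ℕ × ℕ × ℕ × ℕ × ℕ)) where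
  toFun := fun ⟨x, hx⟩ =>
    ⟨(((n:ℤ) - (2*x 0 + 2*x 1 + 2*x 2 + x 3)).toNat / 8,
      (x 3 + (((n:ℤ) - (2*x 0 + 2*x 1 + 2*x 2 + x 3)).toNat / 8 : ℕ)).toNat,
      (x 0 + (((n:ℤ) - (2*x 0 + 2*x 1 + 2*x 2 + x 3)).toNat / 8 : ℕ)).toNat,
      (x 1 + (((n:ℤ) - (2*x 0 + 2*x 1 + 2*x 2 + x 3)).toNat / 8 : ℕ)).toNat,
      (x 2 + (((n:ℤ) - (2*x 0 + 2*x 1 + 2*x 2 + x 3)).toNat / 8 : ℕ)).toNat,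
      ((n:ℤ) - (2*x 0 + 2*x 1 + 2*x 2 + x 3)).toNat % 8), by
        obtain ⟨h1, h2, h3, h4, h5⟩ := hx
        simp only [Set.mem_setOf_eq, Finset.coe_filter, Finset.mem_coe, mem_T6]
        constructor
        · omega
        · omega⟩
  invFun := fun ⟨p, hp⟩ =>
    ⟨![(p.2.2.1 : ℤ) - p.1, (p.2.2.2.1 : ℤ) - p.1, (p.2.2.2.2.1 : ℤ) - p.1, (p.2.1 : ℤ) - p.1], by
      have hp' : p ∈ T6 n := hp
      rw [mem_T6] at hp'
      obtain ⟨q, z, c, d, e, r⟩ := p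
      simp only [SQ, Set.mem_setOf_eq, Matrix.cons_val_zero, Matrix.cons_val_one,
        Matrix.head_cons, Matrix.cons_val_two, Matrix.tail_cons, Matrix.cons_val_three] at *
      refine ⟨?_, ?_, ?_, ?_, ?_⟩ <;> omega⟩
  left_inv := by
    rintro ⟨x, hx⟩
    obtain ⟨h1, h2, h3, h4, h5⟩ := hx
    apply Subtype.ext
    funext i
    fin_cases i <;> simp <;> omega
  right_inv := by
    rintro ⟨⟨q, z, c, d, e, r⟩, hp⟩
    have hp' : (q, z, c, d, e, r) ∈ T6 n := hp
    rw [mem_T6] at hp'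
    apply Subtype.ext
    simp only [Matrix.cons_val_zero, Matrix.cons_val_one, Matrix.head_cons,
      Matrix.cons_val_two, Matrix.tail_cons, Matrix.cons_val_three, Prod.mk.injEq]
    simp only at hp'
    refine ⟨?_, ?_, ?_, ?_, ?_, ?_⟩ <;> omega

lemma card_T1 (n : ℕ) : (T1 n).card = if n < 8 then 1 else 0 := by
  classical
  simp only [T1, Finset.filter_eq', Finset.mem_range]
  split_ifs <;> simp

lemma latticeCount_eq (n : ℕ) : latticeCount n = (T6 n).card := by
  rcases Nat.eq_zero_or_pos n with rfl | hn
  · have hne : Qsimplex.Nonempty :=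
      ⟨_, subset_convexHull ℝ _ (Set.mem_insert _ _)⟩
    have h0 : {x : Fin 4 → ℤ | (fun i => (x i : ℝ)) ∈ ((0:ℕ) : ℝ) • Qsimplex} = {0} := by
      ext x
      simp only [Nat.cast_zero, Set.zero_smul_set hne, Set.mem_setOf_eq, Set.mem_zero,
        Set.mem_singleton_iff]
      constructor
      · intro h
        funext i
        have := congrFun h i
        simp only [Pi.zero_apply] at this
        exact_mod_cast this
      · rintro rfl
        funext i
        simp
    rw [latticeCount, h0, Set.ncard_singleton]
    decide
  · have hset : {x : Fin 4 → ℤ | (fun i => (x i : ℝ)) ∈ (n : ℝ) • Qsimplex} = SQ n := by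
      ext x
      rw [Set.mem_setOf_eq, mem_dilate n hn x]
      rfl
    rw [latticeCount, hset]
    have : Set.ncard (SQ n) = Nat.card (SQ n) := rfl
    rw [this, Nat.card_congr (SQequiv n)]
    have : Nat.card ((T6 n : Set (ℕ × ℕ × ℕ × ℕ × ℕ × ℕ))) = (T6 n).card := by
      rw [← Set.ncard_coe_finset]
      rfl
    exact this

open PowerSeries in
lemma PSstep (w : ℕ) (a b : ℕ → ℚ)
    (h1 : ∀ n, w ≤ n → a n = b n + a (n - w))
    (h2 : ∀ n, n < w → a n = b n) :
    (PowerSeries.mk a) * (1 - X ^ w) = PowerSeries.mk b := by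
  ext n
  rw [mul_sub, mul_one, map_sub, PowerSeries.coeff_mul_X_pow']
  simp only [PowerSeries.coeff_mk]
  split_ifs with h
  · rw [h1 n h]; ring
  · rw [h2 n (by omega)]; ring

noncomputable def c6 : ℕ → ℚ := fun n => ((T6 n).card : ℚ)
noncomputable def c5 : ℕ → ℚ := fun n => ((T5 n).card : ℚ)
noncomputable def c4 : ℕ → ℚ := fun n => ((T4 n).card : ℚ)
noncomputable def c3 : ℕ → ℚ := fun n => ((T3 n).card : ℚ)
noncomputable def c2 : ℕ → ℚ := fun n => ((T2 n).card : ℚ)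
noncomputable def c1 : ℕ → ℚ := fun n => ((T1 n).card : ℚ)

open PowerSeries in
lemma S6 : (PowerSeries.mk c6) * (1 - X) = PowerSeries.mk c5 := by
  have := PSstep 1 c6 c5
    (fun n hn => by unfold c6 c5; rw [R6a n hn]; push_cast; ring)
    (fun n hn => by unfold c6 c5; rw [R6b n hn])
  simpa using this

open PowerSeries in
lemma S5 : (PowerSeries.mk c5) * (1 - X) = PowerSeries.mk c4 := by
  have := PSstep 1 c5 c4
    (fun n hn => by unfold c5 c4; rw [R5a n hn]; push_cast; ring)
    (fun n hn => by unfold c5 c4; rw [R5b n hn])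
  simpa using this

open PowerSeries in
lemma S4 : (PowerSeries.mk c4) * (1 - X ^ 2) = PowerSeries.mk c3 :=
  PSstep 2 c4 c3
    (fun n hn => by unfold c4 c3; rw [R4a n hn]; push_cast; ring)
    (fun n hn => by unfold c4 c3; rw [R4b n hn])

open PowerSeries in
lemma S3 : (PowerSeries.mk c3) * (1 - X ^ 2) = PowerSeries.mk c2 :=
  PSstep 2 c3 c2
    (fun n hn => by unfold c3 c2; rw [R3a n hn]; push_cast; ring)
    (fun n hn => by unfold c3 c2; rw [R3b n hn])

open PowerSeries in
lemma S2 : (PowerSeries.mk c2) * (1 - X ^ 2) = PowerSeries.mk c1 :=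
  PSstep 2 c2 c1
    (fun n hn => by unfold c2 c1; rw [R2a n hn]; push_cast; ring)
    (fun n hn => by unfold c2 c1; rw [R2b n hn])

open PowerSeries in
lemma S1 : (PowerSeries.mk c1) * (1 - X) = 1 - X ^ 8 := by
  have hb : (1 - X^8 : PowerSeries ℚ) =
      PowerSeries.mk (fun n => if n = 0 then 1 else if n = 8 then (-1:ℚ) else 0) := by
    ext n
    simp only [map_sub, PowerSeries.coeff_one, PowerSeries.coeff_X_pow, PowerSeries.coeff_mk]
    split_ifs <;> norm_num <;> omega
  rw [hb, show (1 - X : PowerSeries ℚ) = 1 - X^1 by rw [pow_one]]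
  refine PSstep 1 c1 _ ?_ ?_
  · intro n hn
    simp only [c1, card_T1]
    split_ifs <;> norm_num <;> omega
  · intro n hn
    simp only [c1, card_T1]
    split_ifs <;> norm_num <;> omega

/-- `∑_{n≥0} c_n t^n = (1 - t⁸)/((1 - t²)³(1 - t)³)` where `c_n = #(nQ ∩ ℤ⁴)`,
stated as an identity of formal power series over `ℚ`. -/
theorem ehrhart_series_Q :
    (PowerSeries.mk fun n => (latticeCount n : ℚ)) *
        ((1 - (X : PowerSeries ℚ)^2)^3 * (1 - X)^3) = 1 - X^8 := by

  have hmk : (PowerSeries.mk fun n => (latticeCount n : ℚ)) = PowerSeries.mk c6 := by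
    ext n
    simp only [PowerSeries.coeff_mk]
    rw [latticeCount_eq n]
    rfl
  rw [hmk]
  have expand : (1 - (X : PowerSeries ℚ)^2)^3 * (1 - X)^3 =
      (1 - X) * (1 - X) * (1 - X^2) * (1 - X^2) * (1 - X^2) * (1 - X) := by ring
  rw [expand]
  calc PowerSeries.mk c6 * ((1 - X) * (1 - X) * (1 - X^2) * (1 - X^2) * (1 - X^2) * (1 - X))
      = ((((PowerSeries.mk c6 * (1 - X)) * (1 - X)) * (1 - X^2) * (1 - X^2) * (1 - X^2)) * (1 - X)) := by ring
    _ = 1 - X^8 := by rw [S6, S5, S4, S3, S2, S1]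
end

section
/- For every positive integer w1 and formal variable s, the identity ∑_{w2≥w1} s^{w2}·f(w1,w2) = s^{w1}·[ w1²(1+s)/(4(1−s)) + w1/2 + (5+6s+5s²)/(8(1−s²)) + (−1)^{w1}·(3+2s+3s²)/(8(1−s²)) ] holds as formal power series, where f(w1,w2) = w1²/2 + 2 if w1, w2 even and w1 < w2; w1²/2 + 1 if w1 even, w2 odd, w1 < w2; (w1²+1)/2 if w1 odd and w1 < w2; w1²/4 + w1/2 + 1 if w2 = w1 even; (w1²+2w1+1)/4 if w2 = w1 odd. -/
open PowerSeries

/-- The number of lattice triangles with first and second widths `w1 ≤ w2`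
(for `w1 ≥ 1`). -/
def triCount (w1 w2 : ℕ) : ℚ :=
  if w1 = w2 then
    (if Even w1 then (w1 : ℚ)^2 / 4 + w1 / 2 + 1 else ((w1 : ℚ)^2 + 2 * w1 + 1) / 4)
  else if Even w1 then
    (if Even w2 then (w1 : ℚ)^2 / 2 + 2 else (w1 : ℚ)^2 / 2 + 1)
  else ((w1 : ℚ)^2 + 1) / 2

/-- For positive `w1`,
`∑_{w2 ≥ w1} s^{w2} f(w1,w2) = s^{w1}[w1²(1+s)/(4(1-s)) + w1/2 + (5+6s+5s²)/(8(1-s²))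
+ (-1)^{w1}(3+2s+3s²)/(8(1-s²))]` as formal power series over `ℚ`; equivalently, after
clearing denominators by `8(1-s²)`:
`(∑_{w2 ≥ w1} s^{w2} f(w1,w2))·8(1-s²) =
s^{w1}(2w1²(1+s)² + 4w1(1-s²) + (5+6s+5s²) + (-1)^{w1}(3+2s+3s²))`. -/
theorem genfun_fixed_width (w1 : ℕ) (hw1 : 0 < w1) :
    (PowerSeries.mk fun w2 : ℕ => if w1 ≤ w2 then triCount w1 w2 else 0) *
        (8 * (1 - (X : PowerSeries ℚ)^2)) =
      (X : PowerSeries ℚ)^w1 *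
        (2 * (w1 : PowerSeries ℚ)^2 * (1 + X)^2 + 4 * (w1 : PowerSeries ℚ) * (1 - X^2) +
          (5 + 6 * X + 5 * X^2) + (-1)^w1 * (3 + 2 * X + 3 * X^2)) := by
  set a0 : ℚ := 2 * (w1:ℚ)^2 + 4 * w1 + 5 + (-1:ℚ)^w1 * 3 with ha0
  set a1 : ℚ := 4 * (w1:ℚ)^2 + 6 + (-1:ℚ)^w1 * 2 with ha1
  set a2 : ℚ := 2 * (w1:ℚ)^2 - 4 * w1 + 5 + (-1:ℚ)^w1 * 3 with ha2
  have hL : (PowerSeries.mk fun w2 : ℕ => if w1 ≤ w2 then triCount w1 w2 else 0) *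
        (8 * (1 - (X : PowerSeries ℚ)^2)) =
      C 8 * (PowerSeries.mk fun w2 : ℕ => if w1 ≤ w2 then triCount w1 w2 else 0) +
      C (-8) * ((PowerSeries.mk fun w2 : ℕ => if w1 ≤ w2 then triCount w1 w2 else 0) * X^2) := by
    simp only [map_neg, map_ofNat]
    ring
  have hR : (X : PowerSeries ℚ)^w1 *
        (2 * (w1 : PowerSeries ℚ)^2 * (1 + X)^2 + 4 * (w1 : PowerSeries ℚ) * (1 - X^2) +
          (5 + 6 * X + 5 * X^2) + (-1)^w1 * (3 + 2 * X + 3 * X^2)) =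
      C a0 * X^w1 + C a1 * X^(w1+1) + C a2 * X^(w1+2) := by
    rw [ha0, ha1, ha2]
    simp only [map_add, map_sub, map_mul, map_pow, map_neg, map_one, map_ofNat, map_natCast]
    ring
  rw [hL, hR]
  ext n
  simp only [map_add, coeff_C_mul, coeff_mk, coeff_mul_X_pow', coeff_C]
  rcases lt_or_ge n w1 with h | h
  · have h1 : ¬ w1 ≤ n := by omega
    have h2 : ¬ w1 ≤ n - 2 := by omega
    have h3 : ¬ w1 ≤ n → True := fun _ => trivial
    have h4 : ¬ w1 + 1 ≤ n := by omega
    have h5 : ¬ w1 + 2 ≤ n := by omega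
    simp [h1, h2, h4, h5]
  · obtain h | h | h | h : n = w1 ∨ n = w1 + 1 ∨ n = w1 + 2 ∨ w1 + 3 ≤ n := by omega
    · subst h
      have h2 : ¬ n ≤ n - 2 := by omega
      have h4 : ¬ n + 1 ≤ n := by omega
      have h5 : ¬ n + 2 ≤ n := by omega
      have h6 : n - n = 0 := by omega
      rcases Nat.even_or_odd n with he | ho
      · simp only [le_refl, if_true, h2, if_false, h4, h5, h6, triCount,
          he, he.neg_one_pow, ha0]
        split <;> ring
      · simp only [le_refl, if_true, h2, if_false, h4, h5, h6, triCount,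
          Nat.not_even_iff_odd.mpr ho, ho.neg_one_pow, ha0]
        split <;> ring
    · subst h
      have h1 : w1 ≤ w1 + 1 := by omega
      have h2 : ¬ w1 ≤ w1 + 1 - 2 := by omega
      have h3 : w1 ≠ w1 + 1 := by omega
      have h5 : ¬ w1 + 2 ≤ w1 + 1 := by omega
      have h6 : w1 + 1 - w1 = 1 := by omega
      have h7 : w1 + 1 - (w1 + 1) = 0 := by omega
      rcases Nat.even_or_odd w1 with he | ho
      · simp only [h1, if_true, h2, if_false, h3, h5, h6, h7, le_refl, triCount,
          Nat.even_add_one, he, not_true, he.neg_one_pow, ha1]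
        norm_num <;> ring
      · simp only [h1, if_true, h2, if_false, h3, h5, h6, h7, le_refl, triCount,
          Nat.not_even_iff_odd.mpr ho, ho.neg_one_pow, ha1]
        norm_num <;> ring
    · subst h
      have h1 : w1 ≤ w1 + 2 := by omega
      have h2 : w1 + 2 - 2 = w1 := by omega
      have h3 : w1 ≠ w1 + 2 := by omega
      have h6 : w1 + 2 - w1 = 2 := by omega
      have h7 : w1 + 2 - (w1 + 1) = 1 := by omega
      have h8 : w1 + 2 - (w1 + 2) = 0 := by omega
      have h9 : 2 ≤ w1 + 2 := by omega
      have h11 : w1 + 1 ≤ w1 + 2 := by omega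
      have hp : Even (w1 + 2) ↔ Even w1 := by simp [Nat.even_add_one, Nat.even_add]
      rcases Nat.even_or_odd w1 with he | ho
      · simp only [h1, if_true, h2, h3, if_false, h6, h7, h8, h9, h11, le_refl, triCount,
          hp, he, if_true, he.neg_one_pow, ha2]
        norm_num <;> ring
      · simp only [h1, if_true, h2, h3, if_false, h6, h7, h8, h9, h11, le_refl, triCount,
          Nat.not_even_iff_odd.mpr ho, if_false, ho.neg_one_pow, ha2]
        norm_num <;> ring
    · have h1 : w1 ≤ n := by omega
      have h2 : w1 ≤ n - 2 := by omega
      have h3 : w1 ≠ n := by omega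
      have h3' : w1 ≠ n - 2 := by omega
      have h4 : ¬ n - w1 = 0 := by omega
      have h5 : ¬ n - (w1 + 1) = 0 := by omega
      have h6 : ¬ n - (w1 + 2) = 0 := by omega
      have h7 : 2 ≤ n := by omega
      have h8 : w1 ≤ n := by omega
      have h9 : w1 + 1 ≤ n := by omega
      have h10 : w1 + 2 ≤ n := by omega
      have hp : Even (n - 2) ↔ Even n := by
        rw [Nat.even_sub (by omega : 2 ≤ n)]; simp
      simp only [h1, h2, if_true, h3, h3', if_false, h4, h5, h6, h7, h8, h9, h10, hp, triCount]
      rcases Nat.even_or_odd w1 with he | ho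
      · rcases Nat.even_or_odd n with he2 | ho2
        · simp only [he, he2, if_true] <;> ring
        · simp only [he, Nat.not_even_iff_odd.mpr ho2, if_true, if_false] <;> ring
      · simp only [Nat.not_even_iff_odd.mpr ho, if_false] <;> ring
end
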